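/- For every pair (π, σ) ∈ A(n) and every i, the alternating chain construction visits each woman at most once: the women w_1, …, w_r in the chain m_1 = n, w_i = π(m_i), m_{i+1} = σ^{-1}(w_i) are pairwise distinct. -/
import Mathlib


/- We work with `n + 2` people of each sex (so the number of people is at least 2),
men and women both indexed by `Fin (n+2)`; man `0` is "Mr. 1" and man `Fin.last (n+1)`
is "Mr. n", and similarly for women.

A pair `(π, σ)` of total permutations of `Fin (n+2)` encodes an element of one of the
sets `A(n)`, `B(n)`, `C(n)` of pairs (marriage matching, affair matching) of
Zeilberger's proof, via dummy values at the unused points: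
* `A(n)`: `π` is the marriage matching of all men to all women, and the affair
  matching `{2,…,n-1} → {2',…,(n-1)'}` is encoded by a permutation `σ` fixing the
  endpoints `0` and `last`.
* `B(n)`: the marriage matching `{1,…,n-1} → {1',…,(n-1)'}` is encoded by `π` with the
  dummy value `π last = last`, and the affair matching `{2,…,n} → {2',…,n'}` by `σ`
  with dummy value `σ 0 = 0`.
* `C(n)`: the marriage matching `{1,…,n-1} → {2',…,n'}` is encoded by `π` with dummy
  value `π last = 0`, and the affair matching `{2,…,n} → {1',…,(n-1)'}` by `σ` with
  dummy value `σ 0 = last`. -/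

/-- A pair (marriages, affairs) of permutations. -/
abbrev PairPerm (n : ℕ) := Equiv.Perm (Fin (n + 2)) × Equiv.Perm (Fin (n + 2))

/-- The last index (Mr./Ms. `n`). -/
def lastF (n : ℕ) : Fin (n + 2) := Fin.last (n + 1)

/-- The middle indices `{2,…,n-1}` (people having affairs in `A(n)`). -/
def middleF (n : ℕ) : Finset (Fin (n + 2)) := (Finset.univ.erase 0).erase (lastF n)

/-- Membership in `A(n)`: the affair permutation fixes the two endpoints. -/
def InA {n : ℕ} (p : PairPerm n) : Prop := p.2 0 = 0 ∧ p.2 (lastF n) = lastF n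

/-- Membership in `B(n)`: dummy marriage `n ↦ n'`, dummy affair `1 ↦ 1'`. -/
def InB {n : ℕ} (p : PairPerm n) : Prop := p.1 (lastF n) = lastF n ∧ p.2 0 = 0

/-- Membership in `C(n)`: dummy marriage `n ↦ 1'`, dummy affair `1 ↦ n'`. -/
def InC {n : ℕ} (p : PairPerm n) : Prop := p.1 (lastF n) = 0 ∧ p.2 0 = lastF n

/-- The alternating chain of men: `m 0 = n`, and `m (k+1)` is the lover of the wife of
`m k` (wife: apply `π`; lover: apply `σ⁻¹`). -/
def chainM {n : ℕ} (p : PairPerm n) : ℕ → Fin (n + 2)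
  | 0 => lastF n
  | k + 1 => p.2.symm (p.1 (chainM p k))

/-- The alternating chain of women: `w k` is the wife of `m k`. -/
def chainW {n : ℕ} (p : PairPerm n) (k : ℕ) : Fin (n + 2) := p.1 (chainM p k)

/-- `TStep p q` says that `q` is obtained from `p` by Zeilberger's map `T`: along the
alternating chain `m 0 = n, w 0, m 1, w 1, …` of `p`, which terminates at the first
woman `w (r-1) ∈ {1', n'}`, marriages `(m k, w k)` become affairs and affairs
`(m (k+1), w k)` become marriages; everything off the chain is unchanged, and the
dummy values are set according to whether the chain ended at `1'` or at `n'`. -/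
def TStep {n : ℕ} (p q : PairPerm n) : Prop :=
  ∃ r : ℕ, 1 ≤ r ∧
    (∀ k, k + 1 < r → chainW p k ≠ 0 ∧ chainW p k ≠ lastF n) ∧
    (chainW p (r - 1) = 0 ∨ chainW p (r - 1) = lastF n) ∧
    (∀ i, (∀ k, k < r → i ≠ chainM p k) → q.1 i = p.1 i) ∧
    (∀ i, i ≠ 0 → (∀ k, k < r → i ≠ chainM p k) → q.2 i = p.2 i) ∧
    (∀ k, k + 1 < r → q.1 (chainM p (k + 1)) = chainW p k) ∧
    q.1 (lastF n) = chainW p (r - 1) ∧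
    (∀ k, k < r → q.2 (chainM p k) = chainW p k) ∧
    q.2 0 = (if chainW p (r - 1) = 0 then lastF n else 0)

/-- The women visited by the alternating chain up to its termination are pairwise
distinct: if the chain first terminates after `r` steps (all earlier women are in the
middle, and `w (r-1) ∈ {1', n'}`), then `w 0, …, w (r-1)` are pairwise distinct. -/
theorem chain_women_distinct {n : ℕ} (p : PairPerm n) (hp : InA p) (r : ℕ)
    (hr : 1 ≤ r)
    (hmid : ∀ k, k + 1 < r → chainW p k ≠ 0 ∧ chainW p k ≠ lastF n)
    (hterm : chainW p (r - 1) = 0 ∨ chainW p (r - 1) = lastF n) :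
    ∀ i j, i < r → j < r → chainW p i = chainW p j → i = j := by
  have key : ∀ i d, chainM p i = chainM p (i + d) → chainM p 0 = chainM p d := by
    intro i
    induction i with
    | zero => intro d h; simpa using h
    | succ i ih =>
      intro d h
      apply ih
      have he : i + 1 + d = (i + d) + 1 := by omega
      rw [he] at h
      simp only [chainM] at h
      exact p.1.injective (p.2.symm.injective h)
  have main : ∀ i j, i < j → j < r → chainW p i ≠ chainW p j := by
    intro i j hij hjr heq
    have hm : chainM p i = chainM p j := p.1.injective heq
    have h0 : chainM p 0 = chainM p (j - i) := by
      apply key i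
      rwa [Nat.add_sub_cancel' hij.le]
    obtain ⟨d, hd⟩ : ∃ d, j - i = d + 1 := ⟨j - i - 1, by omega⟩
    rw [hd] at h0
    simp only [chainM] at h0
    have hw : chainW p d = lastF n := by
      have h2 : p.2 (lastF n) = chainW p d := by
        have := congrArg p.2 h0
        simpa [chainW] using this
      rw [hp.2] at h2
      exact h2.symm
    exact (hmid d (by omega)).2 hw
  intro i j hi hj heq
  rcases lt_trichotomy i j with h | h | h
  · exact absurd heq (main i j h hj)
  · exact h
  · exact absurd heq.symm (main j i h hi)
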